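/- arXiv:2001.01328 — 2 statements merged into one kernel-verified Lean document; each statement's English description precedes it below -/
import Mathlib

section
/- Let (Ω, F, P) be a probability space and let F, F_h, G, G_h : ℝ^d × Ω → ℝ^d (indexed by h > 0) be measurable maps. Fix z ∈ ℝ^d. Suppose (i) F_h(z', ·) → F(z', ·) in probability as h → 0 for each fixed z', and G_h(z, ·) → G(z, ·) in probability; (ii) for every M > 0, sup_{|z'| ≤ M} |F_h(z', ω) − F(z', ω)| → 0 in probability as h → 0; and (iii) for every M > 0 there is an almost-surely finite random variable C with sup_{|z'| ≤ 2M} of the Lipschitz constant of F(·, ω) on that ball bounded by C. Then F_h(G_h(z, ·), ·) → F(G(z, ·), ·) in probability as h → 0. -/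
/-!
Fix `ε, δ > 0`. On the event where `‖G(z)‖ ≤ M`, `G_h(z)` is within `min M η` of `G(z)`,
`F(·, ω)` is `K`-Lipschitz on the ball of radius `2M` and `F_h(·, ω)` is uniformly `ε/2`-close
to `F(·, ω)` there, the triangle inequality gives `|F_h(G_h(z)) - F(G(z))| < ε` once `Kη < ε/2`.
The first two exceptional events are small for `M, K` large, the last two for `h` small.

The random Lipschitz constant need not be measurable. Restricting to a countable dense subset
of the ball makes the event "`F(·, ω)` is `K`-Lipschitz" measurable, and since `F(·, ω)` is
a.s. Lipschitz, hence continuous, on the ball, the restriction loses nothing almost surely.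
-/

open MeasureTheory Filter Topology Metric
open scoped NNReal ENNReal

theorem measure_le_of_subset_union_four {Ω : Type*} [MeasurableSpace Ω] {μ : Measure Ω}
    {s a b c d : Set Ω} {δ : ℝ≥0∞} (hs : s ⊆ a ∪ b ∪ c ∪ d) (ha : μ a ≤ δ / 4)
    (hb : μ b ≤ δ / 4) (hc : μ c ≤ δ / 4) (hd : μ d ≤ δ / 4) : μ s ≤ δ :=
  calc μ s ≤ μ (a ∪ b ∪ c) + μ d := (measure_mono hs).trans (measure_union_le _ _)
    _ ≤ μ (a ∪ b) + μ c + μ d := by gcongr; exact measure_union_le _ _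
    _ ≤ μ a + μ b + μ c + μ d := by gcongr; exact measure_union_le _ _
    _ ≤ δ / 4 + δ / 4 + δ / 4 + δ / 4 := by gcongr
    _ = δ := by
        rw [ENNReal.div_add_div_same, ENNReal.div_add_div_same, ENNReal.div_add_div_same]
        ring_nf
        exact ENNReal.mul_div_cancel_right (by norm_num) (by norm_num)

section Tightness

variable {Ω : Type*} [MeasurableSpace Ω] {μ : Measure Ω} [IsFiniteMeasure μ]

theorem tendsto_measure_lt_atTop {Y : Ω → ℝ} (hY : AEMeasurable Y μ) :
    Tendsto (fun M : ℝ => μ {ω | M < Y ω}) atTop (𝓝 0) := by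
  have hlim := tendsto_measure_iInter_atTop (μ := μ) (s := fun M : ℝ => {ω | M < Y ω})
    (fun _ => nullMeasurableSet_lt aemeasurable_const hY)
    (fun _ _ hMN _ hω => hMN.trans_lt hω) ⟨0, measure_ne_top μ _⟩
  have hempty : (⋂ M : ℝ, {ω | M < Y ω}) = ∅ :=
    Set.iInter_eq_empty_iff.2 fun ω => ⟨Y ω, lt_irrefl (Y ω)⟩
  rwa [hempty, measure_empty] at hlim

variable {α β : Type*} [PseudoEMetricSpace α]
  [PseudoEMetricSpace β] [MeasurableSpace β] [OpensMeasurableSpace β] [SecondCountableTopology β]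

theorem measurableSet_lipschitzOnWith {F : α → Ω → β} (hF : ∀ x, Measurable (F x))
    {D : Set α} (hD : D.Countable) (K : ℝ≥0) :
    MeasurableSet {ω | LipschitzOnWith K (F · ω) D} := by
  have hset : {ω | LipschitzOnWith K (F · ω) D} =
      ⋂ x ∈ D, ⋂ y ∈ D, {ω | edist (F x ω) (F y ω) ≤ K * edist x y} := by
    ext ω
    simp [LipschitzOnWith]
  rw [hset]
  exact .biInter hD fun x _ => .biInter hD fun y _ =>
    measurableSet_le ((hF x).edist (hF y)) measurable_const

theorem tendsto_measure_not_lipschitzOnWith {F : α → Ω → β} (hF : ∀ x, Measurable (F x))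
    {s : Set α} (hs : TopologicalSpace.IsSeparable s) (hs_closed : IsClosed s)
    (hlip : ∀ᵐ ω ∂μ, ∃ C, LipschitzOnWith C (F · ω) s) :
    Tendsto (fun K : ℝ≥0 => μ {ω | ¬ LipschitzOnWith K (F · ω) s}) atTop (𝓝 0) := by
  obtain ⟨D, hDs, hD, hsD⟩ := hs.exists_countable_dense_subset
  set t : ℝ≥0 → Set Ω := fun K => {ω | ¬ LipschitzOnWith K (F · ω) D}
  have ht_anti : Antitone t := fun _ _ hKL _ hω hL => hω (hL.weaken hKL)
  have ht_null : μ (⋂ K, t K) = 0 := by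
    have hsub : ⋂ K, t K ⊆ {ω | ¬ ∃ C, LipschitzOnWith C (F · ω) s} :=
      fun ω hω ⟨C, hC⟩ => Set.mem_iInter.1 hω C (hC.mono hDs)
    exact measure_mono_null hsub (ae_iff.1 hlip)
  have ht_lim := tendsto_measure_iInter_atTop (μ := μ) (s := t)
    (fun K => (measurableSet_lipschitzOnWith hF hD K).compl.nullMeasurableSet) ht_anti
    ⟨0, measure_ne_top μ _⟩
  rw [ht_null] at ht_lim
  refine tendsto_of_tendsto_of_tendsto_of_le_of_le tendsto_const_nhds ht_lim
    (fun _ => zero_le) fun K => measure_mono_ae ?_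
  filter_upwards [hlip] with ω ⟨C, hC⟩ hnot hKD
  have hcont : ContinuousOn (F · ω) (closure D) :=
    hC.continuousOn.mono (hs_closed.closure_subset_iff.2 hDs)
  exact hnot ((hKD.closure hcont).mono hsD)

end Tightness

theorem dist_comp_lt_of_lipschitzOnWith {E β : Type*} [SeminormedAddCommGroup E]
    [PseudoMetricSpace β] {f g : E → β} {K : ℝ≥0} {M η ε : ℝ} {x y : E}
    (hf : LipschitzOnWith K f (closedBall 0 (2 * M)))
    (hg : ∀ w, ‖w‖ ≤ 2 * M → dist (g w) (f w) < ε / 2)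
    (hx : ‖x‖ ≤ M) (hyx : dist y x < min M η) (hKη : K * η < ε / 2) :
    dist (g y) (f x) < ε := by
  have hy : ‖y‖ ≤ 2 * M := by
    have := dist_triangle y x 0
    rw [dist_zero_right, dist_zero_right] at this
    linarith [min_le_left M η]
  have hfyx : dist (f y) (f x) < ε / 2 :=
    calc dist (f y) (f x) ≤ K * dist y x :=
          hf.dist_le_mul y (mem_closedBall_zero_iff.2 hy) x
            (mem_closedBall_zero_iff.2 (by linarith [norm_nonneg x]))
      _ ≤ K * η := mul_le_mul_of_nonneg_left (hyx.le.trans (min_le_right _ _)) K.coe_nonneg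
      _ < ε / 2 := hKη
  calc dist (g y) (f x) ≤ dist (g y) (f y) + dist (f y) (f x) := dist_triangle _ _ _
    _ < ε / 2 + ε / 2 := add_lt_add (hg y hy) hfyx
    _ = ε := add_halves ε

theorem composition_tendstoInMeasure_general
    {Ω : Type*} [MeasurableSpace Ω] (P : Measure Ω) [IsProbabilityMeasure P]
    {d : ℕ}
    (F G : EuclideanSpace ℝ (Fin d) → Ω → EuclideanSpace ℝ (Fin d))
    (Fh Gh : ℝ → EuclideanSpace ℝ (Fin d) → Ω → EuclideanSpace ℝ (Fin d))
    (hFmeas : Measurable fun p : EuclideanSpace ℝ (Fin d) × Ω => F p.1 p.2)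
    (hGmeas : Measurable fun p : EuclideanSpace ℝ (Fin d) × Ω => G p.1 p.2)
    (z : EuclideanSpace ℝ (Fin d))
    -- (i) pointwise convergence in probability of F_h and convergence of G_h at z
    (hGconv : TendstoInMeasure P (fun h => Gh h z) (𝓝[>] (0 : ℝ)) (G z))
    -- (ii) local uniform convergence in probability of F_h to F
    (hunif : ∀ M : ℝ, 0 < M → ∀ ε : ℝ, 0 < ε →
      Tendsto (fun h => P {ω | ∃ z' : EuclideanSpace ℝ (Fin d),
          ‖z'‖ ≤ M ∧ ε ≤ dist (Fh h z' ω) (F z' ω)})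
        (𝓝[>] (0 : ℝ)) (𝓝 0))
    -- (iii) a.s. finite random local Lipschitz bound for F on balls of radius 2M
    (hlip : ∀ M : ℝ, 0 < M → ∃ C : Ω → ℝ,
      ∀ᵐ ω ∂P, ∀ z₁ z₂ : EuclideanSpace ℝ (Fin d), ‖z₁‖ ≤ 2 * M → ‖z₂‖ ≤ 2 * M →
        dist (F z₁ ω) (F z₂ ω) ≤ C ω * dist z₁ z₂) :
    TendstoInMeasure P (fun h ω => Fh h (Gh h z ω) ω) (𝓝[>] (0 : ℝ))
      (fun ω => F (G z ω) ω) := by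
  have hGz : Measurable (G z) := hGmeas.comp measurable_prodMk_left
  have hFx : ∀ x, Measurable (F x) := fun x => hFmeas.comp measurable_prodMk_left
  have hlip_ball : ∀ M : ℝ, 0 < M →
      ∀ᵐ ω ∂P, ∃ C, LipschitzOnWith C (F · ω) (closedBall 0 (2 * M)) := fun M hM => by
    obtain ⟨C, hC⟩ := hlip M hM
    filter_upwards [hC] with ω hω
    exact ⟨_, .of_dist_le' fun x hx y hy =>
      hω x y (mem_closedBall_zero_iff.1 hx) (mem_closedBall_zero_iff.1 hy)⟩
  refine tendstoInMeasure_iff_dist.2 fun ε hε => ENNReal.tendsto_nhds_zero.2 fun δ hδ => ?_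
  have hδ4 : 0 < δ / 4 := ENNReal.div_pos hδ.ne' (by norm_num)
  obtain ⟨M, hGM, hM⟩ := ((ENNReal.tendsto_nhds_zero.1
    (tendsto_measure_lt_atTop (μ := P) hGz.norm.aemeasurable) _ hδ4).and
      (eventually_gt_atTop 0)).exists
  obtain ⟨K, hFK⟩ := (ENNReal.tendsto_nhds_zero.1 (tendsto_measure_not_lipschitzOnWith hFx
    (.of_separableSpace _) isClosed_closedBall (hlip_ball M hM)) _ hδ4).exists
  obtain ⟨η, hη, hKη⟩ := exists_pos_mul_lt (half_pos hε) K
  filter_upwards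
    [ENNReal.tendsto_nhds_zero.1 (tendstoInMeasure_iff_dist.1 hGconv _ (lt_min hM hη)) _ hδ4,
      ENNReal.tendsto_nhds_zero.1 (hunif (2 * M) (by positivity) _ (half_pos hε)) _ hδ4]
    with h hGh hFh
  refine measure_le_of_subset_union_four (fun ω hω => ?_) hGM hFK hGh hFh
  by_contra hgood
  simp only [Set.mem_union, Set.mem_ofPred_eq, not_or, not_lt, not_le, not_not,
    not_exists, not_and] at hgood
  obtain ⟨⟨⟨hGω, hLip⟩, hGhω⟩, hFhω⟩ := hgood
  exact (dist_comp_lt_of_lipschitzOnWith hLip hFhω hGω hGhω hKη).not_ge hω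

/-- Composition/continuous-mapping theorem for random functions converging in probability
(Theorem 3.2.3 of "Scalable Gradients for Stochastic Differential Equations"). -/
theorem composition_tendstoInMeasure
    {Ω : Type*} [MeasurableSpace Ω] (P : Measure Ω) [IsProbabilityMeasure P]
    {d : ℕ}
    (F G : EuclideanSpace ℝ (Fin d) → Ω → EuclideanSpace ℝ (Fin d))
    (Fh Gh : ℝ → EuclideanSpace ℝ (Fin d) → Ω → EuclideanSpace ℝ (Fin d))
    (hFmeas : Measurable fun p : EuclideanSpace ℝ (Fin d) × Ω => F p.1 p.2)
    (hGmeas : Measurable fun p : EuclideanSpace ℝ (Fin d) × Ω => G p.1 p.2)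
    (hFhmeas : ∀ h, Measurable fun p : EuclideanSpace ℝ (Fin d) × Ω => Fh h p.1 p.2)
    (hGhmeas : ∀ h, Measurable fun p : EuclideanSpace ℝ (Fin d) × Ω => Gh h p.1 p.2)
    (z : EuclideanSpace ℝ (Fin d))
    -- (i) pointwise convergence in probability of F_h and convergence of G_h at z
    (hFconv : ∀ z', TendstoInMeasure P (fun h => Fh h z') (𝓝[>] (0 : ℝ)) (F z'))
    (hGconv : TendstoInMeasure P (fun h => Gh h z) (𝓝[>] (0 : ℝ)) (G z))
    -- (ii) local uniform convergence in probability of F_h to F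
    (hunif : ∀ M : ℝ, 0 < M → ∀ ε : ℝ, 0 < ε →
      Tendsto (fun h => P {ω | ∃ z' : EuclideanSpace ℝ (Fin d),
          ‖z'‖ ≤ M ∧ ε ≤ dist (Fh h z' ω) (F z' ω)})
        (𝓝[>] (0 : ℝ)) (𝓝 0))
    -- (iii) a.s. finite random local Lipschitz bound for F on balls of radius 2M
    (hlip : ∀ M : ℝ, 0 < M → ∃ C : Ω → ℝ,
      ∀ᵐ ω ∂P, ∀ z₁ z₂ : EuclideanSpace ℝ (Fin d), ‖z₁‖ ≤ 2 * M → ‖z₂‖ ≤ 2 * M →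
        dist (F z₁ ω) (F z₂ ω) ≤ C ω * dist z₁ z₂) :
    TendstoInMeasure P (fun h ω => Fh h (Gh h z ω) ω) (𝓝[>] (0 : ℝ))
      (fun ω => F (G z ω) ω) :=
  composition_tendstoInMeasure_general P F G Fh Gh hFmeas hGmeas z hGconv hunif hlip
end

section
/- Let σ : ℝ^d × ℝ → ℝ^{d×d} be a diagonal diffusion matrix, i.e. σ(z)_{ij} = 0 for i ≠ j, with each diagonal entry σ_{ii} a C¹ function of z_i alone. Let G(x) ∈ ℝ^{(2d+p)×d} be the block matrix with rows indexed by (z, a^z, a^θ) given by G_{k,j}(x) = −σ_{jj}(z_j) δ_{kj} for k ≤ d, G_{d+k,j}(x) = (∂σ_{jj}(z_j)/∂z_j) a^z_j δ_{kj} for k ≤ d, and G_{2d+l,j}(x) = (∂σ_{jj}(z_j)/∂θ_l) a^z_j for l ≤ p. Then G satisfies the commutativity condition: for all j₁, j₂ ∈ {1,…,d} and k ∈ {1,…,2d+p}, Σ_{i=1}^{2d+p} G_{i,j₂}(x) ∂G_{k,j₁}(x)/∂x_i = Σ_{i=1}^{2d+p} G_{i,j₁}(x) ∂G_{k,j₂}(x)/∂x_i.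 -/
/-- Partial derivative of `f : (ι → ℝ) → ℝ` in the `i`-th coordinate at `x`. -/
noncomputable def pderiv' {ι : Type*} [DecidableEq ι]
    (i : ι) (f : (ι → ℝ) → ℝ) (x : ι → ℝ) : ℝ :=
  deriv (fun s => f (Function.update x i s)) (x i)

lemma pderiv'_eq_zero_of_const {ι : Type*} [DecidableEq ι]
    (i : ι) (f : (ι → ℝ) → ℝ) (x : ι → ℝ)
    (h : ∀ s, f (Function.update x i s) = f x) : pderiv' i f x = 0 := by
  unfold pderiv'
  rw [funext h]
  exact deriv_const _ _

/-- The diffusion of the augmented stochastic adjoint system of a diagonal-noise SDE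
satisfies the commutativity condition (Appendix A.5 of the paper).

The augmented state is indexed by `Fin d ⊕ Fin d ⊕ Fin p`, corresponding to
`(z, a^z, a^θ)`.  Here `σ j` is the diagonal entry `σ_{jj}` (a function of `z_j` alone),
and `σθ l j` represents `∂σ_{jj}/∂θ_l` (a function of `z_j` alone). -/
theorem adjoint_diffusion_commutative (d p : ℕ)
    (σ : Fin d → ℝ → ℝ) (hσ : ∀ j, ContDiff ℝ 2 (σ j))
    (σθ : Fin p → Fin d → ℝ → ℝ) (hσθ : ∀ l j, ContDiff ℝ 1 (σθ l j))
    (G : ((Fin d ⊕ Fin d ⊕ Fin p) → ℝ) → (Fin d ⊕ Fin d ⊕ Fin p) → Fin d → ℝ)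
    (hG : ∀ x k j, G x k j =
      match k with
      | Sum.inl i => if i = j then -σ j (x (Sum.inl j)) else 0
      | Sum.inr (Sum.inl i) =>
          if i = j then deriv (σ j) (x (Sum.inl j)) * x (Sum.inr (Sum.inl j)) else 0
      | Sum.inr (Sum.inr l) => σθ l j (x (Sum.inl j)) * x (Sum.inr (Sum.inl j))) :
    ∀ x (j₁ j₂ : Fin d) (k : Fin d ⊕ Fin d ⊕ Fin p),
      (∑ i : Fin d ⊕ Fin d ⊕ Fin p, G x i j₂ * pderiv' i (fun y => G y k j₁) x) =
      (∑ i : Fin d ⊕ Fin d ⊕ Fin p, G x i j₁ * pderiv' i (fun y => G y k j₂) x) := by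
  intro x j₁ j₂ k
  rcases eq_or_ne j₁ j₂ with rfl | hne
  · rfl
  · have key : ∀ (ja jb : Fin d), ja ≠ jb →
        (∑ i : Fin d ⊕ Fin d ⊕ Fin p, G x i jb * pderiv' i (fun y => G y k ja) x) = 0 := by
      intro ja jb hab
      apply Finset.sum_eq_zero
      intro i _
      rcases i with m | m | l
      · rcases eq_or_ne m ja with rfl | hm
        · rw [hG]; simp [hab]
        · rw [pderiv'_eq_zero_of_const, mul_zero]
          intro s
          simp only [hG]
          cases k with
          | inl i => simp [Function.update_apply, (Ne.symm hm)]
          | inr k' =>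
            cases k' with
            | inl i => simp [Function.update_apply, (Ne.symm hm)]
            | inr l => simp [Function.update_apply, (Ne.symm hm)]
      · rcases eq_or_ne m ja with rfl | hm
        · rw [hG]; simp [hab]
        · rw [pderiv'_eq_zero_of_const, mul_zero]
          intro s
          simp only [hG]
          cases k with
          | inl i => simp [Function.update_apply]
          | inr k' =>
            cases k' with
            | inl i => simp [Function.update_apply, (Ne.symm hm)]
            | inr l => simp [Function.update_apply, (Ne.symm hm)]
      · rw [pderiv'_eq_zero_of_const, mul_zero]
        intro s
        simp only [hG]
        cases k with
        | inl i => simp [Function.update_apply]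
        | inr k' =>
          cases k' with
          | inl i => simp [Function.update_apply]
          | inr l' => simp [Function.update_apply]
    rw [key j₁ j₂ hne, key j₂ j₁ hne.symm]
end
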